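/- Under overlap and ignorability, the inverse-probability-weighted identity holds: E[ Z·Y / e(X) ] = E[Y(1)], where e(X) = P(Z=1|X). -/

import Mathlib

/-!
On each fibre `{X = x}` the weight `Z / e(x)` keeps only the treated units, where `Y = Y(1)`.
Ignorability says that, given `X = x`, the law of `(Y(1), Y(0))` is the same on the treated units as
on the whole fibre, so `E[Y(1); Z = 1, X = x] = e(x) · E[Y(1); X = x]`; dividing by `e(x) > 0` and
summing over `x` gives `E[Y(1)]`. Fibres of probability zero contribute nothing on either side.
-/

open scoped Classical
open Finset

noncomputable def pr {Ω : Type*} [Fintype Ω] (P : Ω → ℝ) (A : Ω → Prop) : ℝ :=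
  ∑ ω, if A ω then P ω else 0

noncomputable def expec {Ω : Type*} [Fintype Ω] (P : Ω → ℝ) (f : Ω → ℝ) : ℝ :=
  ∑ ω, P ω * f ω

noncomputable def cexp {Ω : Type*} [Fintype Ω] (P : Ω → ℝ) (f : Ω → ℝ) (A : Ω → Prop) : ℝ :=
  (∑ ω, if A ω then P ω * f ω else 0) / pr P A

/-- The partial expectation `E[f; A] = E[f · 1_A]`. -/
noncomputable def expecOn {Ω : Type*} [Fintype Ω] (P : Ω → ℝ) (f : Ω → ℝ) (A : Ω → Prop) : ℝ :=
  ∑ ω, if A ω then P ω * f ω else 0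

section

variable {Ω : Type*} [Fintype Ω] (P : Ω → ℝ)

theorem pr_nonneg (hP : ∀ ω, 0 ≤ P ω) (A : Ω → Prop) : 0 ≤ pr P A :=
  sum_nonneg fun ω _ => by split <;> simp [hP ω]

theorem pr_mono (hP : ∀ ω, 0 ≤ P ω) {A B : Ω → Prop} (hAB : ∀ ω, A ω → B ω) :
    pr P A ≤ pr P B :=
  sum_le_sum fun ω _ => by split_ifs <;> simp_all

theorem expec_eq_sum_expecOn_fiber {𝒳 : Type*} [Fintype 𝒳] (X : Ω → 𝒳) (f : Ω → ℝ) :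
    expec P f = ∑ x, expecOn P f (fun ω => X ω = x) := by
  simp only [expecOn, expec]
  rw [sum_comm]
  exact sum_congr rfl fun ω _ => by simp

theorem expecOn_eq_zero_of_pr_eq_zero (hP : ∀ ω, 0 ≤ P ω) {A : Ω → Prop} (hA : pr P A = 0)
    (f : Ω → ℝ) : expecOn P f A = 0 := by
  have hnull : ∀ ω, A ω → P ω = 0 := fun ω hω => by
    have := (sum_eq_zero_iff_of_nonneg fun ω _ => by split <;> simp [hP ω]).1 hA ω (mem_univ ω)
    simpa [hω] using this
  exact sum_eq_zero fun ω _ => by split_ifs with hω <;> simp [hnull ω, *]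

theorem expecOn_comp_eq_sum_pr {α : Type*} (V : Ω → α) (g : α → ℝ) (A : Ω → Prop) :
    expecOn P (fun ω => g (V ω)) A
      = ∑ v ∈ univ.image V, g v * pr P (fun ω => V ω = v ∧ A ω) := by
  simp only [expecOn, pr, mul_sum]
  rw [sum_comm]
  refine sum_congr rfl fun ω _ => ?_
  rw [sum_eq_single_of_mem (V ω) (mem_image_of_mem V (mem_univ ω))]
  · by_cases hA : A ω <;> simp [hA, mul_comm]
  · intro v _ hv
    simp [Ne.symm hv]

/-- If `V` has the same law on `A` as on `B`, then `E[g(V) | A] = E[g(V) | B]`; both are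
cross-multiplied so that null events need no special treatment. -/
theorem expecOn_comp_mul_pr_eq_of_same_law {α : Type*} (V : Ω → α) (g : α → ℝ) {A B : Ω → Prop}
    (hlaw : ∀ v, pr P (fun ω => V ω = v ∧ A ω) * pr P B
      = pr P (fun ω => V ω = v ∧ B ω) * pr P A) :
    expecOn P (fun ω => g (V ω)) A * pr P B = expecOn P (fun ω => g (V ω)) B * pr P A := by
  simp only [expecOn_comp_eq_sum_pr, sum_mul, mul_assoc, hlaw]

end

theorem expecOn_ipw_fiber {Ω 𝒳 : Type*} [Fintype Ω] (P : Ω → ℝ) (X : Ω → 𝒳)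
    (Z Y1 Y0 Y : Ω → ℝ) (hZ : ∀ ω, Z ω = 0 ∨ Z ω = 1)
    (consistency : ∀ ω, Y ω = Z ω * Y1 ω + (1 - Z ω) * Y0 ω) (e : 𝒳 → ℝ) (x : 𝒳) :
    expecOn P (fun ω => Z ω * Y ω / e (X ω)) (fun ω => X ω = x)
      = expecOn P Y1 (fun ω => Z ω = 1 ∧ X ω = x) / e x := by
  rw [expecOn, expecOn, sum_div]
  refine sum_congr rfl fun ω _ => ?_
  by_cases hx : X ω = x
  · rcases hZ ω with h0 | h1
    · simp [h0]
    · simp only [hx, ↓reduceIte, h1, consistency, one_mul, sub_self, zero_mul, add_zero, and_self]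
      ring
  · simp [hx]

theorem ipw_identity_treated_general {Ω 𝒳 : Type*} [Fintype Ω] [Fintype 𝒳]
    (P : Ω → ℝ) (hP : ∀ ω, 0 ≤ P ω)
    (X : Ω → 𝒳) (Z : Ω → ℝ) (Y1 Y0 Y : Ω → ℝ)
    (hZ : ∀ ω, Z ω = 0 ∨ Z ω = 1)
    (consistency : ∀ ω, Y ω = Z ω * Y1 ω + (1 - Z ω) * Y0 ω)
    (e : 𝒳 → ℝ)
    (he : ∀ x, e x = pr P (fun ω => Z ω = 1 ∧ X ω = x) / pr P (fun ω => X ω = x))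
    (overlap : ∀ x : 𝒳, 0 < pr P (fun ω => X ω = x) → 0 < e x)
    (ignorability : ∀ (x : 𝒳) (z y1 y0 : ℝ),
      pr P (fun ω => Y1 ω = y1 ∧ Y0 ω = y0 ∧ Z ω = z ∧ X ω = x) * pr P (fun ω => X ω = x)
        = pr P (fun ω => Y1 ω = y1 ∧ Y0 ω = y0 ∧ X ω = x)
            * pr P (fun ω => Z ω = z ∧ X ω = x)) :
    expec P (fun ω => Z ω * Y ω / e (X ω)) = expec P Y1 := by
  rw [expec_eq_sum_expecOn_fiber P X, expec_eq_sum_expecOn_fiber P X]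
  refine sum_congr rfl fun x _ => ?_
  rw [expecOn_ipw_fiber P X Z Y1 Y0 Y hZ consistency]
  rcases (pr_nonneg P hP fun ω => X ω = x).eq_or_lt with hnull | hpos
  · have htreated_null : pr P (fun ω => Z ω = 1 ∧ X ω = x) = 0 :=
      le_antisymm (hnull ▸ pr_mono P hP fun ω => And.right) (pr_nonneg P hP _)
    rw [expecOn_eq_zero_of_pr_eq_zero P hP hnull.symm,
      expecOn_eq_zero_of_pr_eq_zero P hP htreated_null, zero_div]
  · have hprop : pr P (fun ω => Z ω = 1 ∧ X ω = x) = e x * pr P (fun ω => X ω = x) := by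
      rw [he x, div_mul_cancel₀ _ hpos.ne']
    have hfactor := expecOn_comp_mul_pr_eq_of_same_law P (fun ω => (Y1 ω, Y0 ω)) Prod.fst
      (A := fun ω => Z ω = 1 ∧ X ω = x) (B := fun ω => X ω = x) fun v => by
        simp only [Prod.ext_iff, and_assoc]
        exact ignorability x 1 v.1 v.2
    rw [hprop, ← mul_assoc] at hfactor
    rw [div_eq_iff (overlap x hpos).ne', mul_right_cancel₀ hpos.ne' hfactor]

/-- Under overlap and ignorability, E[Z·Y/e(X)] = E[Y(1)]. -/
theorem ipw_identity_treated {Ω 𝒳 : Type*} [Fintype Ω] [Fintype 𝒳]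
    (P : Ω → ℝ) (hP : ∀ ω, 0 ≤ P ω) (hP1 : ∑ ω, P ω = 1)
    (X : Ω → 𝒳) (Z : Ω → ℝ) (Y1 Y0 Y : Ω → ℝ)
    (hZ : ∀ ω, Z ω = 0 ∨ Z ω = 1)
    (consistency : ∀ ω, Y ω = Z ω * Y1 ω + (1 - Z ω) * Y0 ω)
    (e : 𝒳 → ℝ)
    (he : ∀ x, e x = pr P (fun ω => Z ω = 1 ∧ X ω = x) / pr P (fun ω => X ω = x))
    (overlap : ∀ x : 𝒳, 0 < pr P (fun ω => X ω = x) → 0 < e x)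
    (ignorability : ∀ (x : 𝒳) (z y1 y0 : ℝ),
      pr P (fun ω => Y1 ω = y1 ∧ Y0 ω = y0 ∧ Z ω = z ∧ X ω = x) * pr P (fun ω => X ω = x)
        = pr P (fun ω => Y1 ω = y1 ∧ Y0 ω = y0 ∧ X ω = x)
            * pr P (fun ω => Z ω = z ∧ X ω = x)) :
    expec P (fun ω => Z ω * Y ω / e (X ω)) = expec P Y1 :=
  ipw_identity_treated_general P hP X Z Y1 Y0 Y hZ consistency e he overlap ignorability
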